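/- Let n ≥ 2 and f ∈ L¹([0,1]^n). If ∫ f φ dξ = 0 for all bounded measurable φ of the form φ(ξ) = Π_{i=1}^n φ_i(ξ_i) with each ∫ φ_i dξ_i = 0 — equivalently, the 'interaction part' of f vanishes — then for n = 2: f(ξ_1,ξ_2) = f_1(ξ_1) + f_2(ξ_2) − ∫ f dξ almost everywhere. -/

import Mathlib

open MeasureTheory

/-- Lebesgue measure restricted to the unit interval. -/
noncomputable def lineMeasure : Measure ℝ := volume.restrict (Set.Icc (0:ℝ) 1)

instance : IsProbabilityMeasure lineMeasure :=
  ⟨by simp [lineMeasure, Real.volume_Icc]⟩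

section Aux
variable {α : Type*} [MeasurableSpace α] {m : Measure α}

lemma int_mul_bdd {F φ : α → ℝ} (hF : Integrable F m) (hφ : Measurable φ)
    (C : ℝ) (hC : ∀ x, |φ x| ≤ C) : Integrable (fun x => F x * φ x) m := by
  have h := hF.bdd_mul hφ.aestronglyMeasurable (Filter.Eventually.of_forall fun x => by simpa using hC x)
  exact h.congr (Filter.Eventually.of_forall fun x => mul_comm _ _)

end Aux

variable {μ : Measure ℝ} [IsProbabilityMeasure μ]

lemma comp_fst_integrable {g : ℝ → ℝ} (hg : Integrable g μ) :
    Integrable (fun p : ℝ × ℝ => g p.1) (μ.prod μ) := by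
  have h1 : (μ.prod μ).map Prod.fst = μ := by
    rw [Measure.map_fst_prod]; simp
  have := (integrable_map_measure (by rw [h1]; exact hg.1)
    measurable_fst.aemeasurable).mp (by rwa [h1])
  exact this

lemma comp_snd_integrable {g : ℝ → ℝ} (hg : Integrable g μ) :
    Integrable (fun p : ℝ × ℝ => g p.2) (μ.prod μ) := by
  have h1 : (μ.prod μ).map Prod.snd = μ := by
    rw [Measure.map_snd_prod]; simp
  have := (integrable_map_measure (by rw [h1]; exact hg.1)
    measurable_snd.aemeasurable).mp (by rwa [h1])
  exact this

lemma prodKey (F : ℝ × ℝ → ℝ) (hF : Integrable F (μ.prod μ))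
    (h : ∀ φ₁ φ₂ : ℝ → ℝ, Measurable φ₁ → Measurable φ₂ →
      (∃ C, ∀ x, |φ₁ x| ≤ C) → (∃ C, ∀ x, |φ₂ x| ≤ C) →
      ∫ x, φ₁ x ∂μ = 0 → ∫ x, φ₂ x ∂μ = 0 →
      ∫ p, F p * (φ₁ p.1 * φ₂ p.2) ∂(μ.prod μ) = 0) :
    F =ᵐ[μ.prod μ] fun p =>
      (∫ y, F (p.1, y) ∂μ) + (∫ x, F (x, p.2) ∂μ) - ∫ q, F q ∂(μ.prod μ) := by
  set ν := μ.prod μ with hν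
  set m₀ : ℝ → ℝ := fun x => ∫ y, F (x, y) ∂μ with hm₀def
  set m₁ : ℝ → ℝ := fun y => ∫ x, F (x, y) ∂μ with hm₁def
  set I : ℝ := ∫ q, F q ∂ν with hIdef
  have hm₀ : Integrable m₀ μ := hF.integral_prod_left
  have hm₁ : Integrable m₁ μ := hF.integral_prod_right
  have hIm₀ : ∫ x, m₀ x ∂μ = I := (integral_prod F hF).symm
  have hIm₁ : ∫ y, m₁ y ∂μ = I := (integral_prod_symm F hF).symm
  have hm₀p : Integrable (fun p : ℝ × ℝ => m₀ p.1) ν := comp_fst_integrable hm₀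
  have hm₁p : Integrable (fun p : ℝ × ℝ => m₁ p.2) ν := comp_snd_integrable hm₁
  set G : ℝ × ℝ → ℝ := fun p => F p - m₀ p.1 - m₁ p.2 + I with hGdef
  have hG : Integrable G ν := ((hF.sub hm₀p).sub hm₁p).add (integrable_const I)
  -- rectangle computation
  have hrect : ∀ A B : Set ℝ, MeasurableSet A → MeasurableSet B →
      ∫ p in A ×ˢ B, G p ∂ν = 0 := by
    intro A B hA hB
    set iA : ℝ → ℝ := A.indicator (fun _ => (1:ℝ)) with hiAdef
    set iB : ℝ → ℝ := B.indicator (fun _ => (1:ℝ)) with hiBdef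
    set a : ℝ := (μ A).toReal with hadef
    set b : ℝ := (μ B).toReal with hbdef
    have hiA_meas : Measurable iA := measurable_const.indicator hA
    have hiB_meas : Measurable iB := measurable_const.indicator hB
    have hiA_bdd : ∀ x, |iA x| ≤ 1 := by
      intro x; by_cases hx : x ∈ A <;> simp [hiAdef, Set.indicator_apply, hx]
    have hiB_bdd : ∀ x, |iB x| ≤ 1 := by
      intro x; by_cases hx : x ∈ B <;> simp [hiBdef, Set.indicator_apply, hx]
    have hiA_int : Integrable iA μ := (integrable_const (1:ℝ)).indicator hA
    have hiB_int : Integrable iB μ := (integrable_const (1:ℝ)).indicator hB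
    have hiA_sum : ∫ x, iA x ∂μ = a := by
      rw [hiAdef, integral_indicator_const (1:ℝ) hA]; simp [hadef, Measure.real]
    have hiB_sum : ∫ x, iB x ∂μ = b := by
      rw [hiBdef, integral_indicator_const (1:ℝ) hB]; simp [hbdef, Measure.real]
    have ha0 : 0 ≤ a := ENNReal.toReal_nonneg
    have hb0 : 0 ≤ b := ENNReal.toReal_nonneg
    -- the test functions
    set φ₁ : ℝ → ℝ := fun x => iA x - a with hφ₁def
    set φ₂ : ℝ → ℝ := fun x => iB x - b with hφ₂def
    have hφ₁m : Measurable φ₁ := hiA_meas.sub measurable_const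
    have hφ₂m : Measurable φ₂ := hiB_meas.sub measurable_const
    have hφ₁b : ∃ C, ∀ x, |φ₁ x| ≤ C :=
      ⟨1 + a, fun x => (abs_sub _ _).trans (by
        have := hiA_bdd x; simp [abs_of_nonneg ha0]; linarith)⟩
    have hφ₂b : ∃ C, ∀ x, |φ₂ x| ≤ C :=
      ⟨1 + b, fun x => (abs_sub _ _).trans (by
        have := hiB_bdd x; simp [abs_of_nonneg hb0]; linarith)⟩
    have hφ₁0 : ∫ x, φ₁ x ∂μ = 0 := by
      rw [hφ₁def]
      rw [integral_sub hiA_int (integrable_const a), hiA_sum, integral_const]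
      simp
    have hφ₂0 : ∫ x, φ₂ x ∂μ = 0 := by
      rw [hφ₂def]
      rw [integral_sub hiB_int (integrable_const b), hiB_sum, integral_const]
      simp
    have h0 := h φ₁ φ₂ hφ₁m hφ₂m hφ₁b hφ₂b hφ₁0 hφ₂0
    -- integrability of pieces
    have hFab : Integrable (fun p => F p * (iA p.1 * iB p.2)) ν :=
      int_mul_bdd hF ((hiA_meas.comp measurable_fst).mul (hiB_meas.comp measurable_snd)) 1
        (fun p => by
          have := mul_le_one₀ (hiA_bdd p.1) (abs_nonneg _) (hiB_bdd p.2)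
          simpa [abs_mul] using this)
    have hFa : Integrable (fun p => F p * iA p.1) ν :=
      int_mul_bdd hF (hiA_meas.comp measurable_fst) 1 (fun p => hiA_bdd p.1)
    have hFb : Integrable (fun p => F p * iB p.2) ν :=
      int_mul_bdd hF (hiB_meas.comp measurable_snd) 1 (fun p => hiB_bdd p.2)
    -- expand the product
    have hexp : (fun p => F p * (φ₁ p.1 * φ₂ p.2)) =
        fun p => (F p * (iA p.1 * iB p.2) - b * (F p * iA p.1))
          - (a * (F p * iB p.2) - (a * b) * F p) := by
      funext p; simp only [hφ₁def, hφ₂def]; ring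
    rw [hexp] at h0
    have hi1 : Integrable (fun p => F p * (iA p.1 * iB p.2) - b * (F p * iA p.1)) ν :=
      hFab.sub (hFa.const_mul b)
    have hi2 : Integrable (fun p => a * (F p * iB p.2) - (a * b) * F p) ν :=
      (hFb.const_mul a).sub (hF.const_mul (a*b))
    rw [integral_sub hi1 hi2,
      integral_sub hFab (hFa.const_mul b),
      integral_sub (hFb.const_mul a) (hF.const_mul (a*b)),
      integral_const_mul, integral_const_mul, integral_const_mul] at h0
    -- identify the three mixed integrals
    have E1 : ∫ p, F p * (iA p.1 * iB p.2) ∂ν = ∫ p in A ×ˢ B, F p ∂ν := by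
      rw [← integral_indicator (hA.prod hB)]
      congr 1; funext p
      by_cases h1 : p.1 ∈ A <;> by_cases h2 : p.2 ∈ B <;>
        simp [hiAdef, hiBdef, Set.indicator_apply, Set.mem_prod, h1, h2]
    have E2 : ∫ p, F p * iA p.1 ∂ν = ∫ x in A, m₀ x ∂μ := by
      rw [hν, integral_prod _ hFa]
      simp_rw [integral_mul_const]
      rw [← integral_indicator hA]
      congr 1; funext x
      by_cases hx : x ∈ A <;> simp [hiAdef, Set.indicator_apply, hx, hm₀def]
    have E3 : ∫ p, F p * iB p.2 ∂ν = ∫ y in B, m₁ y ∂μ := by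
      rw [hν, integral_prod_symm _ hFb]
      simp_rw [integral_mul_const]
      rw [← integral_indicator hB]
      congr 1; funext y
      by_cases hy : y ∈ B <;> simp [hiBdef, Set.indicator_apply, hy, hm₁def]
    rw [E1, E2, E3] at h0
    -- now compute the set integral of G
    have hGsplit : ∫ p in A ×ˢ B, G p ∂ν =
        (∫ p in A ×ˢ B, F p ∂ν) - (∫ p in A ×ˢ B, m₀ p.1 ∂ν)
          - (∫ p in A ×ˢ B, m₁ p.2 ∂ν) + I * a * b := by
      have hj1 : Integrable (fun p => F p - m₀ p.1) (ν.restrict (A ×ˢ B)) :=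
        (hF.sub hm₀p).integrableOn
      have hj2 : Integrable (fun p => F p - m₀ p.1 - m₁ p.2) (ν.restrict (A ×ˢ B)) :=
        ((hF.sub hm₀p).sub hm₁p).integrableOn
      rw [hGdef]
      rw [integral_add hj2 (integrable_const I).integrableOn,
        integral_sub hj1 hm₁p.integrableOn,
        integral_sub hF.integrableOn hm₀p.integrableOn, setIntegral_const]
      have : ν (A ×ˢ B) = μ A * μ B := by rw [hν, Measure.prod_prod]
      rw [Measure.real, this]
      rw [ENNReal.toReal_mul]
      simp [hadef, hbdef, smul_eq_mul]
      ring
    have Ea : ∫ p in A ×ˢ B, m₀ p.1 ∂ν = (∫ x in A, m₀ x ∂μ) * b := by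
      rw [hν, ← Measure.prod_restrict]
      have := integral_prod_mul (μ := μ.restrict A) (ν := μ.restrict B) m₀ (fun _ => (1:ℝ))
      simpa [hbdef, Measure.restrict_apply_univ, Measure.real] using this
    have Eb : ∫ p in A ×ˢ B, m₁ p.2 ∂ν = a * ∫ y in B, m₁ y ∂μ := by
      rw [hν, ← Measure.prod_restrict]
      have := integral_prod_mul (μ := μ.restrict A) (ν := μ.restrict B) (fun _ => (1:ℝ)) m₁
      simpa [hadef, Measure.restrict_apply_univ, Measure.real] using this
    rw [hGsplit, Ea, Eb]
    linarith
  -- all measurable sets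
  have hall : ∀ s : Set (ℝ × ℝ), MeasurableSet s → ∫ p in s, G p ∂ν = 0 := by
    have huniv : ∫ p, G p ∂ν = 0 := by
      have := hrect Set.univ Set.univ MeasurableSet.univ MeasurableSet.univ
      simpa [Set.univ_prod_univ] using this
    refine MeasurableSpace.induction_on_inter (C := fun s _ => ∫ p in s, G p ∂ν = 0)
      generateFrom_prod.symm isPiSystem_prod (by simp) ?_ ?_ ?_
    · rintro t ⟨A, hA, B, hB, rfl⟩
      exact hrect A B hA hB
    · intro t htm iht
      have hsplit := integral_add_compl htm hG
      rw [iht, zero_add] at hsplit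
      rw [hsplit, huniv]
    · intro g hdisj hgm ihg
      rw [integral_iUnion hgm hdisj hG.integrableOn]
      simp [ihg]
  have hG0 : G =ᵐ[ν] 0 :=
    hG.ae_eq_zero_of_forall_setIntegral_eq_zero (fun s hs _ => hall s hs)
  filter_upwards [hG0] with p hp
  have : F p - m₀ p.1 - m₁ p.2 + I = 0 := hp
  simp only [hm₀def, hm₁def, hIdef] at this ⊢
  linarith

/-- The (product) Lebesgue measure on the unit hypercube `[0,1]^n`. -/
noncomputable def cubeMeasure (n : ℕ) : Measure (Fin n → ℝ) :=
  Measure.pi fun _ => lineMeasure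

instance (n : ℕ) : IsProbabilityMeasure (cubeMeasure n) := by
  unfold cubeMeasure; infer_instance

/-- The `i`-th marginal of `g`: the integral of `g` over all coordinates except the `i`-th
(since `cubeMeasure n` is a product of probability measures, integrating the updated function
over the full cube agrees with integrating over `ξ_i^c`). -/
noncomputable def marginal {n : ℕ} (g : (Fin n → ℝ) → ℝ) (i : Fin n) (x : ℝ) : ℝ :=
  ∫ ξ, g (Function.update ξ i x) ∂(cubeMeasure n)

theorem stmt16 (f : (Fin 2 → ℝ) → ℝ) (hf : Integrable f (cubeMeasure 2))
    (horth : ∀ φ₁ φ₂ : ℝ → ℝ, Measurable φ₁ → Measurable φ₂ →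
      (∃ C, ∀ x, |φ₁ x| ≤ C) → (∃ C, ∀ x, |φ₂ x| ≤ C) →
      ∫ x, φ₁ x ∂lineMeasure = 0 → ∫ x, φ₂ x ∂lineMeasure = 0 →
      ∫ ξ, f ξ * (φ₁ (ξ 0) * φ₂ (ξ 1)) ∂(cubeMeasure 2) = 0) :
    f =ᵐ[cubeMeasure 2]
      fun ξ => marginal f 0 (ξ 0) + marginal f 1 (ξ 1)
        - ∫ η, f η ∂(cubeMeasure 2) := by
  classical
  set μ : Measure ℝ := lineMeasure with hμdef
  set ν : Measure (Fin 2 → ℝ) := cubeMeasure 2 with hνdef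
  set ν' : Measure (ℝ × ℝ) := μ.prod μ with hν'def
  have mp : MeasurePreserving (MeasurableEquiv.finTwoArrow : (Fin 2 → ℝ) ≃ᵐ ℝ × ℝ) ν ν' :=
    measurePreserving_finTwoArrow μ
  set e : (Fin 2 → ℝ) ≃ᵐ ℝ × ℝ := MeasurableEquiv.finTwoArrow with hedef
  have he_app : ∀ ξ : Fin 2 → ℝ, e ξ = (ξ 0, ξ 1) := fun ξ => rfl
  set F : ℝ × ℝ → ℝ := fun p => f (e.symm p) with hFdef
  have hFe : ∀ ξ, F (e ξ) = f ξ := fun ξ => by simp [hFdef]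
  have hFint : Integrable F ν' := by
    rw [← mp.map_eq]
    refine (integrable_map_equiv e F).mpr ?_
    have hcomp : F ∘ e = f := funext hFe
    rw [hcomp]; exact hf
  have hcomp : ∀ H : (ℝ × ℝ) → ℝ, ∫ ξ, H (e ξ) ∂ν = ∫ p, H p ∂ν' :=
    fun H => mp.integral_comp' H
  -- the orthogonality hypothesis on the product space
  have horth' : ∀ φ₁ φ₂ : ℝ → ℝ, Measurable φ₁ → Measurable φ₂ →
      (∃ C, ∀ x, |φ₁ x| ≤ C) → (∃ C, ∀ x, |φ₂ x| ≤ C) →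
      ∫ x, φ₁ x ∂μ = 0 → ∫ x, φ₂ x ∂μ = 0 →
      ∫ p, F p * (φ₁ p.1 * φ₂ p.2) ∂(μ.prod μ) = 0 := by
    intro φ₁ φ₂ h1 h2 h3 h4 h5 h6
    calc ∫ p, F p * (φ₁ p.1 * φ₂ p.2) ∂ν'
        = ∫ ξ, F (e ξ) * (φ₁ (e ξ).1 * φ₂ (e ξ).2) ∂ν := (hcomp _).symm
      _ = ∫ ξ, f ξ * (φ₁ (ξ 0) * φ₂ (ξ 1)) ∂ν := by
          congr 1; funext ξ; rw [hFe, he_app]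
      _ = 0 := horth φ₁ φ₂ h1 h2 h3 h4 h5 h6
  have hkey := prodKey F hFint horth'
  set m₀ : ℝ → ℝ := fun x => ∫ y, F (x, y) ∂μ with hm₀def
  set m₁ : ℝ → ℝ := fun y => ∫ x, F (x, y) ∂μ with hm₁def
  set I : ℝ := ∫ q, F q ∂ν' with hIdef
  have hI : ∫ η, f η ∂ν = I := by
    rw [hIdef, ← hcomp F]
    congr 1; funext ξ; rw [hFe]
  -- identify the marginals a.e.
  have hmapsnd : ν'.map Prod.snd = μ := by
    rw [hν'def, Measure.map_snd_prod]; simp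
  have hmapfst : ν'.map Prod.fst = μ := by
    rw [hν'def, Measure.map_fst_prod]; simp
  have hmarg0ae : ∀ᵐ x ∂μ, marginal f 0 x = m₀ x := by
    filter_upwards [hFint.1.prodMk_left] with x hx
    have h1 : ∀ ξ : Fin 2 → ℝ, f (Function.update ξ 0 x) = F (x, ξ 1) := by
      intro ξ
      rw [← hFe (Function.update ξ 0 x), he_app]
      simp
    have h2 : marginal f 0 x = ∫ p, F (x, p.2) ∂ν' := by
      unfold marginal
      simp_rw [h1]
      rw [← hcomp (fun p => F (x, p.2))]
      rw [← hνdef]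
      congr 1
    rw [h2]
    have hx' : AEStronglyMeasurable (fun y => F (x, y)) (ν'.map Prod.snd) := by
      rwa [hmapsnd]
    have h3 := integral_map (μ := ν') measurable_snd.aemeasurable hx'
    rw [hmapsnd] at h3
    exact h3.symm
  have hswapm : AEStronglyMeasurable (fun q : ℝ × ℝ => F (q.2, q.1)) ν' := by
    have := hFint.1.comp_quasiMeasurePreserving
      (Measure.measurePreserving_swap (μ := μ) (ν := μ)).quasiMeasurePreserving
    exact this
  have hmarg1ae : ∀ᵐ y ∂μ, marginal f 1 y = m₁ y := by
    filter_upwards [hswapm.prodMk_left] with y hy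
    have h1 : ∀ ξ : Fin 2 → ℝ, f (Function.update ξ 1 y) = F (ξ 0, y) := by
      intro ξ
      rw [← hFe (Function.update ξ 1 y), he_app]
      simp
    have h2 : marginal f 1 y = ∫ p, F (p.1, y) ∂ν' := by
      unfold marginal
      simp_rw [h1]
      rw [← hcomp (fun p => F (p.1, y))]
      rw [← hνdef]
      congr 1
    rw [h2]
    have hy' : AEStronglyMeasurable (fun x => F (x, y)) (ν'.map Prod.fst) := by
      rwa [hmapfst]
    have h3 := integral_map (μ := ν') measurable_fst.aemeasurable hy'
    rw [hmapfst] at h3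
    exact h3.symm
  -- lift to the cube along coordinate projections
  have hπ0 : ν.map (fun ξ : Fin 2 → ℝ => ξ 0) = μ := by
    have hco : (fun ξ : Fin 2 → ℝ => ξ 0) = Prod.fst ∘ e := by
      funext ξ; rw [Function.comp_apply, he_app]
    rw [hco, ← Measure.map_map measurable_fst e.measurable, mp.map_eq, hmapfst]
  have hπ1 : ν.map (fun ξ : Fin 2 → ℝ => ξ 1) = μ := by
    have hco : (fun ξ : Fin 2 → ℝ => ξ 1) = Prod.snd ∘ e := by
      funext ξ; rw [Function.comp_apply, he_app]
    rw [hco, ← Measure.map_map measurable_snd e.measurable, mp.map_eq, hmapsnd]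
  have h0cube : ∀ᵐ ξ ∂ν, marginal f 0 (ξ 0) = m₀ (ξ 0) := by
    have ht := Measure.tendsto_ae_map (μ := ν)
      (f := fun ξ : Fin 2 → ℝ => ξ 0) (measurable_pi_apply 0).aemeasurable
    rw [hπ0] at ht
    exact ht.eventually hmarg0ae
  have h1cube : ∀ᵐ ξ ∂ν, marginal f 1 (ξ 1) = m₁ (ξ 1) := by
    have ht := Measure.tendsto_ae_map (μ := ν)
      (f := fun ξ : Fin 2 → ℝ => ξ 1) (measurable_pi_apply 1).aemeasurable
    rw [hπ1] at ht
    exact ht.eventually hmarg1ae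
  have hkeycube : ∀ᵐ ξ ∂ν, f ξ = m₀ (ξ 0) + m₁ (ξ 1) - I := by
    have ht := Measure.tendsto_ae_map (μ := ν) (f := e) e.measurable.aemeasurable
    rw [mp.map_eq] at ht
    filter_upwards [ht.eventually hkey] with ξ hξ
    calc f ξ = F (e ξ) := (hFe ξ).symm
      _ = m₀ (e ξ).1 + m₁ (e ξ).2 - I := hξ
      _ = m₀ (ξ 0) + m₁ (ξ 1) - I := by rw [he_app]
  filter_upwards [hkeycube, h0cube, h1cube] with ξ h1 h2 h3
  rw [h2, h3, hI]
  exact h1
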